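/- arXiv:2504.07506 — 2 statements merged into one kernel-verified Lean document; each statement's English description precedes it below -/
import Mathlib

section
/- Let h : (0,∞) → ℝ be defined by h(t) = ½t² − ½ D₂ ρ t − D₁ β ρ^{r(1−γ_r)} t^{rγ_r}, where D₁, D₂, β, ρ > 0 and rγ_r > 2. If βρ^{r−2} < c*(N,r) := (1/(2D₁(rγ_r−1))) · ((rγ_r−2)/((rγ_r−1)D₂))^{rγ_r−2}, then there exist 0 < R₀ < R₁ such that h(R₀) = h(R₁) = 0 and h(t) > 0 if and only if t ∈ (R₀, R₁). -/
/-! For `t > 0` the profile factors as `h t = t * g t` with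
`g t = t / 2 - D₂ρ / 2 - A t ^ (rγ - 1)` and `A = D₁ β ρ ^ (r (1 - γ))`. Since `rγ - 1 > 1`, `g` is
strictly concave on `[0, ∞)`; it is negative at `0` and for large `t`, and the mass condition is
equivalent to `A s ^ (rγ - 2) < 1 / (2 (rγ - 1))`, which makes `g` positive at
`s = (rγ - 1) D₂ ρ / (rγ - 2)`. A continuous strictly concave function with sign pattern `-, +, -`
vanishes exactly twice and is positive exactly between its two zeros. -/

open Set

theorem StrictConcaveOn.pos_of_nonneg_of_nonneg {D : Set ℝ} {g : ℝ → ℝ}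
    (hg : StrictConcaveOn ℝ D g) {x y z : ℝ} (hx : x ∈ D) (hy : y ∈ D) (hxz : x < z)
    (hzy : z < y) (hgx : 0 ≤ g x) (hgy : 0 ≤ g y) : 0 < g z :=
  (le_min hgx hgy).trans_lt <| hg.lt_on_openSegment hx hy (hxz.trans hzy).ne <| by
    rw [openSegment_eq_Ioo (hxz.trans hzy)]; exact ⟨hxz, hzy⟩

theorem StrictConcaveOn.exists_pos_iff_mem_Ioo {D : Set ℝ} {g : ℝ → ℝ}
    (hg : StrictConcaveOn ℝ D g) (hgc : ContinuousOn g D) {a s b : ℝ} (ha : a ∈ D) (hb : b ∈ D)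
    (has : a < s) (hsb : s < b) (hga : g a < 0) (hgs : 0 < g s) (hgb : g b < 0) :
    ∃ R₀ R₁, a < R₀ ∧ R₀ < R₁ ∧ g R₀ = 0 ∧ g R₁ = 0 ∧
      ∀ t ∈ D, (0 < g t ↔ R₀ < t ∧ t < R₁) := by
  have hIcc : Icc a b ⊆ D := (convex_iff_ordConnected.1 hg.1).out ha hb
  have hs : s ∈ D := hIcc ⟨has.le, hsb.le⟩
  obtain ⟨R₀, ⟨haR₀, hR₀s⟩, hgR₀⟩ := intermediate_value_Icc has.le
    (hgc.mono fun t ht => hIcc ⟨ht.1, ht.2.trans hsb.le⟩) ⟨hga.le, hgs.le⟩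
  obtain ⟨R₁, ⟨hsR₁, hR₁b⟩, hgR₁⟩ := intermediate_value_Icc' hsb.le
    (hgc.mono fun t ht => hIcc ⟨has.le.trans ht.1, ht.2⟩) ⟨hgb.le, hgs.le⟩
  have hR₀ : R₀ ∈ D := hIcc ⟨haR₀, hR₀s.trans hsb.le⟩
  have hR₁ : R₁ ∈ D := hIcc ⟨has.le.trans hsR₁, hR₁b⟩
  have hR₀s : R₀ < s := hR₀s.lt_of_ne (by rintro rfl; linarith)
  have hsR₁ : s < R₁ := hsR₁.lt_of_ne (by rintro rfl; linarith)
  refine ⟨R₀, R₁, haR₀.lt_of_ne (by rintro rfl; linarith), hR₀s.trans hsR₁, hgR₀, hgR₁,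
    fun t ht => ⟨fun hgt => ⟨?_, ?_⟩, fun ⟨hR₀t, htR₁⟩ => ?_⟩⟩
  · by_contra! htR₀
    obtain rfl | htR₀ := htR₀.eq_or_lt
    · linarith
    · linarith [hg.pos_of_nonneg_of_nonneg ht hs htR₀ hR₀s hgt.le hgs.le]
  · by_contra! hR₁t
    obtain rfl | hR₁t := hR₁t.eq_or_lt
    · linarith
    · linarith [hg.pos_of_nonneg_of_nonneg hs ht hsR₁ hR₁t hgs.le hgt.le]
  · exact hg.pos_of_nonneg_of_nonneg hR₀ hR₁ hR₀t htR₁ hgR₀.ge hgR₁.ge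

theorem strictConcaveOn_sub_mul_rpow (c d : ℝ) {A q : ℝ} (hA : 0 < A) (hq : 1 < q) :
    StrictConcaveOn ℝ (Ici 0) fun t => c * t - d - A * t ^ q := by
  refine ⟨convex_Ici 0, fun x hx y hy hxy a b ha hb hab => ?_⟩
  have h := mul_lt_mul_of_pos_left ((strictConvexOn_rpow hq).2 hx hy hxy ha hb hab) hA
  simp only [smul_eq_mul] at h ⊢
  linear_combination h - d * hab

theorem mul_rpow_lt_of_lt_critical {D₁ D₂ β ρ r p : ℝ} (hD₁ : 0 < D₁) (hD₂ : 0 < D₂)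
    (hρ : 0 < ρ) (hp : 2 < p)
    (hmass : β * ρ ^ (r - 2) <
      1 / (2 * D₁ * (p - 1)) * ((p - 2) / ((p - 1) * D₂)) ^ (p - 2)) :
    D₁ * β * ρ ^ (r - p) * ((p - 1) * D₂ * ρ / (p - 2)) ^ (p - 2) < 1 / (2 * (p - 1)) := by
  have hp1 : 0 < p - 1 := by linarith
  have hp2 : 0 < p - 2 := by linarith
  set X := ((p - 1) * D₂ / (p - 2)) ^ (p - 2)
  have hX : 0 < X := by positivity
  rw [← inv_div ((p - 1) * D₂), Real.inv_rpow (by positivity)] at hmass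
  calc D₁ * β * ρ ^ (r - p) * ((p - 1) * D₂ * ρ / (p - 2)) ^ (p - 2)
      = D₁ * X * (β * ρ ^ (r - 2)) := by
        rw [mul_div_right_comm, Real.mul_rpow (by positivity) hρ.le,
          show r - 2 = r - p + (p - 2) by ring, Real.rpow_add hρ]
        ring
    _ < D₁ * X * (1 / (2 * D₁ * (p - 1)) * X⁻¹) := by gcongr
    _ = 1 / (2 * (p - 1)) := by field_simp

theorem half_mul_sub_mul_rpow_pos {D₂ ρ A p s : ℝ} (hD₂ : 0 < D₂) (hρ : 0 < ρ) (hp : 2 < p)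
    (hs : s = (p - 1) * D₂ * ρ / (p - 2)) (hA : A * s ^ (p - 2) < 1 / (2 * (p - 1))) :
    0 < 1 / 2 * s - 1 / 2 * D₂ * ρ - A * s ^ (p - 1) := by
  have hp1 : 0 < p - 1 := by linarith
  have hp2 : 0 < p - 2 := by linarith
  have hs0 : 0 < s := hs ▸ by positivity
  have hlin : 1 / 2 * s - 1 / 2 * D₂ * ρ = 1 / (2 * (p - 1)) * s := by
    rw [hs]; field_simp; ring
  rw [hlin, show s ^ (p - 1) = s ^ (p - 2) * s by
    rw [← Real.rpow_add_one hs0.ne']; ring_nf, ← mul_assoc, ← sub_mul]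
  exact mul_pos (by linarith) hs0

theorem exists_gt_half_mul_sub_mul_rpow_neg {A p d s : ℝ} (hA : 0 < A) (hp : 2 < p) (hd : 0 < d)
    (hs : 0 < s) (hAs : A * s ^ (p - 2) < 1 / 2) :
    ∃ b, s < b ∧ 1 / 2 * b - d - A * b ^ (p - 1) < 0 := by
  have hp2 : 0 < p - 2 := by linarith
  set b := (1 / (2 * A)) ^ (p - 2)⁻¹
  have hb : 0 < b := by positivity
  have hAb : A * b ^ (p - 2) = 1 / 2 := by
    rw [Real.rpow_inv_rpow (by positivity) hp2.ne']; field_simp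
  refine ⟨b, (Real.rpow_lt_rpow_iff hs.le hb.le hp2).1 ?_, ?_⟩
  · exact lt_of_mul_lt_mul_left (hAs.trans_eq hAb.symm) hA.le
  · rw [show p - 1 = p - 2 + 1 by ring, Real.rpow_add_one hb.ne', ← mul_assoc, hAb]
    linarith

theorem stmt5_general (D₁ D₂ β ρ r γ : ℝ) (hD₁ : 0 < D₁) (hD₂ : 0 < D₂) (hβ : 0 < β)
    (hρ : 0 < ρ) (hrγ : 2 < r * γ)
    (hmass : β * ρ ^ (r - 2) <
      1 / (2 * D₁ * (r * γ - 1)) * ((r * γ - 2) / ((r * γ - 1) * D₂)) ^ (r * γ - 2)) :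
    ∃ R₀ R₁ : ℝ, 0 < R₀ ∧ R₀ < R₁ ∧
      (fun t : ℝ => (1 / 2) * t ^ 2 - (1 / 2) * D₂ * ρ * t -
          D₁ * β * ρ ^ (r * (1 - γ)) * t ^ (r * γ)) R₀ = 0 ∧
      (fun t : ℝ => (1 / 2) * t ^ 2 - (1 / 2) * D₂ * ρ * t -
          D₁ * β * ρ ^ (r * (1 - γ)) * t ^ (r * γ)) R₁ = 0 ∧
      ∀ t : ℝ, 0 < t →
        (0 < (1 / 2) * t ^ 2 - (1 / 2) * D₂ * ρ * t -
            D₁ * β * ρ ^ (r * (1 - γ)) * t ^ (r * γ) ↔ R₀ < t ∧ t < R₁) := by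
  set p := r * γ
  set A := D₁ * β * ρ ^ (r * (1 - γ))
  have hA : 0 < A := by positivity
  have hfactor : ∀ t > 0, 1 / 2 * t ^ 2 - 1 / 2 * D₂ * ρ * t - A * t ^ p =
      t * (1 / 2 * t - 1 / 2 * D₂ * ρ - A * t ^ (p - 1)) := fun t ht => by
    rw [show t ^ p = t ^ (p - 1) * t by rw [← Real.rpow_add_one ht.ne']; ring_nf]
    ring
  set s := (p - 1) * D₂ * ρ / (p - 2) with hs
  have hs0 : 0 < s := div_pos (by nlinarith [mul_pos hD₂ hρ]) (by linarith)
  have hAs : A * s ^ (p - 2) < 1 / (2 * (p - 1)) := by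
    simpa only [A, show r * (1 - γ) = r - p by ring] using
      mul_rpow_lt_of_lt_critical hD₁ hD₂ hρ hrγ hmass
  obtain ⟨b, hsb, hgb⟩ := exists_gt_half_mul_sub_mul_rpow_neg (d := 1 / 2 * D₂ * ρ) hA hrγ
    (by positivity) hs0 (hAs.trans_le (by gcongr; linarith))
  have hg0 : 1 / 2 * 0 - 1 / 2 * D₂ * ρ - A * 0 ^ (p - 1) < 0 := by
    simp [Real.zero_rpow (by linarith : p - 1 ≠ 0), hD₂, hρ]
  obtain ⟨R₀, R₁, hR₀, hR₀R₁, hgR₀, hgR₁, hsign⟩ :=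
    (strictConcaveOn_sub_mul_rpow (1 / 2) (1 / 2 * D₂ * ρ) hA (by linarith)).exists_pos_iff_mem_Ioo
      (Continuous.continuousOn (by fun_prop (disch := linarith))) self_mem_Ici
      (hs0.trans hsb).le.ge hs0 hsb hg0 (half_mul_sub_mul_rpow_pos hD₂ hρ hrγ hs hAs) hgb
  refine ⟨R₀, R₁, hR₀, hR₀R₁, ?_, ?_, fun t ht => ?_⟩
  · simp only [hfactor R₀ hR₀, hgR₀, mul_zero]
  · simp only [hfactor R₁ (hR₀.trans hR₀R₁), hgR₁, mul_zero]
  · rw [hfactor t ht, mul_pos_iff_of_pos_left ht]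
    exact hsign t ht.le

/-- Geometry of `h(t) = ½t² − ½D₂ρt − D₁βρ^{r(1−γ)}t^{rγ}`: if
`βρ^{r−2} < c*(N,r)`, there are `0 < R₀ < R₁` with `h(R₀) = h(R₁) = 0` and
`h > 0` exactly on `(R₀, R₁)`. -/
theorem stmt5 (D₁ D₂ β ρ r γ : ℝ) (hD₁ : 0 < D₁) (hD₂ : 0 < D₂) (hβ : 0 < β)
    (hρ : 0 < ρ) (hr : 2 < r) (hrγ : 2 < r * γ)
    (hmass : β * ρ ^ (r - 2) <
      1 / (2 * D₁ * (r * γ - 1)) * ((r * γ - 2) / ((r * γ - 1) * D₂)) ^ (r * γ - 2)) :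
    ∃ R₀ R₁ : ℝ, 0 < R₀ ∧ R₀ < R₁ ∧
      (fun t : ℝ => (1 / 2) * t ^ 2 - (1 / 2) * D₂ * ρ * t -
          D₁ * β * ρ ^ (r * (1 - γ)) * t ^ (r * γ)) R₀ = 0 ∧
      (fun t : ℝ => (1 / 2) * t ^ 2 - (1 / 2) * D₂ * ρ * t -
          D₁ * β * ρ ^ (r * (1 - γ)) * t ^ (r * γ)) R₁ = 0 ∧
      ∀ t : ℝ, 0 < t →
        (0 < (1 / 2) * t ^ 2 - (1 / 2) * D₂ * ρ * t -
            D₁ * β * ρ ^ (r * (1 - γ)) * t ^ (r * γ) ↔ R₀ < t ∧ t < R₁) :=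
  stmt5_general D₁ D₂ β ρ r γ hD₁ hD₂ hβ hρ hrγ hmass
end

section
/- Suppose the function ρ ↦ m(ρ) satisfies m(θρ) < θ² m(ρ) for all θ > 1 whenever m(ρ) is attained, and suppose for ρ ≥ ρ₁ > 0 that (ρ₁²/ρ²)·m(ρ) ≤ m(ρ₁). Then m((ρ² + ρ₁²)^{1/2}) < m(ρ) + m(ρ₁). -/
open Real

lemma one_lt_sqrt_sq_add_sq_div {a b : ℝ} (ha : 0 < a) (hb : b ≠ 0) :
    1 < √(a ^ 2 + b ^ 2) / a := by
  rw [one_lt_div ha, lt_sqrt ha.le]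
  exact lt_add_of_pos_right _ (by positivity)

lemma sqrt_sq_add_sq_div_sq {a b : ℝ} (ha : a ≠ 0) :
    (√(a ^ 2 + b ^ 2) / a) ^ 2 = 1 + b ^ 2 / a ^ 2 := by
  rw [div_pow, sq_sqrt (by positivity)]
  field_simp

lemma lt_of_scaling_to_sqrt_sq_add_sq (m : ℝ → ℝ) {ρ ρ₁ : ℝ} (hρ : 0 < ρ) (hρ₁ : ρ₁ ≠ 0)
    (hscal : ∀ θ : ℝ, 1 < θ → m (θ * ρ) < θ ^ 2 * m ρ) :
    m (√(ρ ^ 2 + ρ₁ ^ 2)) < m ρ + ρ₁ ^ 2 / ρ ^ 2 * m ρ := by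
  set θ := √(ρ ^ 2 + ρ₁ ^ 2) / ρ
  calc m (√(ρ ^ 2 + ρ₁ ^ 2)) = m (θ * ρ) := by rw [div_mul_cancel₀ _ hρ.ne']
    _ < θ ^ 2 * m ρ := hscal θ (one_lt_sqrt_sq_add_sq_div hρ hρ₁)
    _ = m ρ + ρ₁ ^ 2 / ρ ^ 2 * m ρ := by rw [sqrt_sq_add_sq_div_sq hρ.ne']; ring

/-- Strict sub-additivity: if `m(θρ) < θ²m(ρ)` for all `θ > 1` and
`(ρ₁²/ρ²)m(ρ) ≤ m(ρ₁)` for `ρ ≥ ρ₁ > 0`, then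
`m(√(ρ² + ρ₁²)) < m(ρ) + m(ρ₁)`. -/
theorem stmt10 (m : ℝ → ℝ) (ρ ρ₁ : ℝ) (hρ₁ : 0 < ρ₁) (hρρ₁ : ρ₁ ≤ ρ)
    (hscal : ∀ θ : ℝ, 1 < θ → m (θ * ρ) < θ ^ 2 * m ρ)
    (hcomp : ρ₁ ^ 2 / ρ ^ 2 * m ρ ≤ m ρ₁) :
    m ((ρ ^ 2 + ρ₁ ^ 2) ^ ((1 : ℝ) / 2)) < m ρ + m ρ₁ := by
  rw [← sqrt_eq_rpow]
  have := lt_of_scaling_to_sqrt_sq_add_sq m (hρ₁.trans_le hρρ₁) hρ₁.ne' hscal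
  linarith
end
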